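/- Let K ≥ 2 and k̃ ∈ Fin K. Let v : Fin K → ℕ → ℕ → [0,1] and β : ℕ → ℕ → ℝ with β(n,m) ≥ 0 for all n, m. Assume that for every k ≠ k̃, v_k(n,m) → 1 along the product filter, and v_{k̃}(n,m) → 0 along the product filter. Let d̂(n,m) = d̂(v(n,m), β(n,m)) be the thresholding decision and cFDR(n,m) = cFDR(d̂(n,m), v(n,m)). Then: (a) if eventually along the product filter d̂_{k̃}(n,m) = 1 (i.e., v_{k̃}(n,m) > β(n,m)), then β(n,m) → 0 along the product filter, eventually d̂_k(n,m) = 1 for all k, and cFDR(n,m) → 1/K; (b) if eventually along the product filter d̂_{k̃}(n,m) = 0, then cFDR(n,m) → 0. In particular, the only possible nonzero asymptotic value of cFDR under such thresholding decisions is 1/K. -/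

import Mathlib

/-!
If `k₀` is eventually rejected then `0 ≤ β < v k₀ → 0` squeezes `β` to `0`, so every other
hypothesis, whose `v k → 1`, is eventually rejected too. With all `K` hypotheses rejected the cFDR
is the mean of the `1 - v k`, and only the `k₀` term of that mean does not vanish, giving `1 / K`.
If `k₀` is eventually kept, the numerator of the cFDR is at most `∑_{k ≠ k₀} (1 - v k) → 0`,
while its denominator is at least `1`.
-/

open Filter Finset Topology

noncomputable section

variable {ι : Type*}

def thresholdDecision (v : ι → ℝ) (β : ℝ) (k : ι) : ℝ := if v k > β then 1 else 0

def cFDR [Fintype ι] (d v : ι → ℝ) : ℝ := (∑ k, d k * (1 - v k)) / max (∑ k, d k) 1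

section Decision

variable {v : ι → ℝ} {β : ℝ} {k : ι}

theorem thresholdDecision_of_lt (h : β < v k) : thresholdDecision v β k = 1 := if_pos h

theorem thresholdDecision_of_not_lt (h : ¬β < v k) : thresholdDecision v β k = 0 := if_neg h

theorem thresholdDecision_nonneg : 0 ≤ thresholdDecision v β k := by
  unfold thresholdDecision; split <;> norm_num

theorem thresholdDecision_le_one : thresholdDecision v β k ≤ 1 := by
  unfold thresholdDecision; split <;> norm_num

end Decision

section CFDR

variable [Fintype ι] {d v : ι → ℝ}

theorem cFDR_nonneg (hd : ∀ k, 0 ≤ d k) (hv : ∀ k, v k ≤ 1) : 0 ≤ cFDR d v :=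
  div_nonneg (sum_nonneg fun k _ => mul_nonneg (hd k) (sub_nonneg.2 (hv k)))
    (zero_le_one.trans (le_max_right _ _))

theorem cFDR_of_forall_eq_one [Nonempty ι] (hd : ∀ k, d k = 1) :
    cFDR d v = (∑ k, (1 - v k)) / Fintype.card ι := by
  have hcard : (1 : ℝ) ≤ Fintype.card ι := by exact_mod_cast Fintype.card_pos
  simp only [cFDR, hd, one_mul, sum_const, card_univ, nsmul_eq_mul, mul_one,
    max_eq_left hcard]

theorem cFDR_le_sum_compl_of_eq_zero [DecidableEq ι] {k₀ : ι} (hd0 : ∀ k, 0 ≤ d k)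
    (hd1 : ∀ k, d k ≤ 1) (hv : ∀ k, v k ≤ 1) (hk₀ : d k₀ = 0) :
    cFDR d v ≤ ∑ k ∈ {k₀}ᶜ, (1 - v k) := by
  have hnum : 0 ≤ ∑ k, d k * (1 - v k) :=
    sum_nonneg fun k _ => mul_nonneg (hd0 k) (sub_nonneg.2 (hv k))
  calc cFDR d v ≤ ∑ k, d k * (1 - v k) := div_le_self hnum (le_max_right _ _)
    _ = ∑ k ∈ {k₀}ᶜ, d k * (1 - v k) := by
      rw [Fintype.sum_eq_add_sum_compl k₀, hk₀, zero_mul, zero_add]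
    _ ≤ ∑ k ∈ {k₀}ᶜ, (1 - v k) :=
      sum_le_sum fun k _ => mul_le_of_le_one_left (sub_nonneg.2 (hv k)) (hd1 k)

end CFDR

section Asymptotics

variable {α : Type*} {l : Filter α} {v : ι → α → ℝ} {β : α → ℝ} {k₀ : ι}

theorem tendsto_sum_compl_one_sub [Fintype ι] [DecidableEq ι]
    (hv1 : ∀ k, k ≠ k₀ → Tendsto (v k) l (𝓝 1)) :
    Tendsto (fun a => ∑ k ∈ {k₀}ᶜ, (1 - v k a)) l (𝓝 0) := by
  rw [← sum_const_zero (s := ({k₀}ᶜ : Finset ι))]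
  refine tendsto_finsetSum _ fun k hk => ?_
  simpa using (hv1 k (by simpa using hk)).const_sub 1

theorem tendsto_sum_one_sub [Fintype ι] (hv1 : ∀ k, k ≠ k₀ → Tendsto (v k) l (𝓝 1))
    (hv0 : Tendsto (v k₀) l (𝓝 0)) :
    Tendsto (fun a => ∑ k, (1 - v k a)) l (𝓝 1) := by
  classical
  simp_rw [Fintype.sum_eq_add_sum_compl k₀]
  simpa using (hv0.const_sub 1).add (tendsto_sum_compl_one_sub hv1)

theorem tendsto_threshold_zero (hβ0 : ∀ a, 0 ≤ β a) (hv0 : Tendsto (v k₀) l (𝓝 0))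
    (hrej : ∀ᶠ a in l, β a < v k₀ a) : Tendsto β l (𝓝 0) :=
  tendsto_of_tendsto_of_tendsto_of_le_of_le' tendsto_const_nhds hv0
    (Eventually.of_forall hβ0) (hrej.mono fun _ h => h.le)

theorem eventually_forall_threshold_lt [Finite ι] (hv1 : ∀ k, k ≠ k₀ → Tendsto (v k) l (𝓝 1))
    (hβ : Tendsto β l (𝓝 0)) (hrej : ∀ᶠ a in l, β a < v k₀ a) :
    ∀ᶠ a in l, ∀ k, β a < v k a := by
  refine eventually_all.2 fun k => ?_
  by_cases hk : k = k₀
  · exact hk ▸ hrej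
  · have hgap : Tendsto (fun a => v k a - β a) l (𝓝 1) := by
      simpa using (hv1 k hk).sub hβ
    exact (hgap.eventually_const_lt one_pos).mono fun _ h => sub_pos.1 h

theorem tendsto_cFDR_threshold_of_eventually_forall_lt [Fintype ι] [Nonempty ι]
    (hv1 : ∀ k, k ≠ k₀ → Tendsto (v k) l (𝓝 1)) (hv0 : Tendsto (v k₀) l (𝓝 0))
    (hall : ∀ᶠ a in l, ∀ k, β a < v k a) :
    Tendsto (fun a => cFDR (thresholdDecision (v · a) (β a)) (v · a)) l
      (𝓝 (1 / Fintype.card ι)) := by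
  refine ((tendsto_sum_one_sub hv1 hv0).div_const _).congr' ?_
  filter_upwards [hall] with a ha
  exact (cFDR_of_forall_eq_one fun k => thresholdDecision_of_lt (ha k)).symm

theorem tendsto_cFDR_threshold_of_eventually_not_lt [Fintype ι] (hv : ∀ k a, v k a ≤ 1)
    (hv1 : ∀ k, k ≠ k₀ → Tendsto (v k) l (𝓝 1)) (hkeep : ∀ᶠ a in l, ¬β a < v k₀ a) :
    Tendsto (fun a => cFDR (thresholdDecision (v · a) (β a)) (v · a)) l (𝓝 0) := by
  classical
  refine squeeze_zero' (Eventually.of_forall fun a =>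
    cFDR_nonneg (fun _ => thresholdDecision_nonneg) (fun k => hv k a)) ?_ (tendsto_sum_compl_one_sub hv1)
  filter_upwards [hkeep] with a ha
  exact cFDR_le_sum_compl_of_eq_zero (fun _ => thresholdDecision_nonneg)
    (fun _ => thresholdDecision_le_one) (fun k => hv k a) (thresholdDecision_of_not_lt ha)

end Asymptotics

end

theorem cFDR_alpha_control_one_over_K_general
    (K : ℕ) (k₀ : Fin K)
    (v : Fin K → ℕ → ℕ → ℝ)
    (hv01 : ∀ k n m, 0 ≤ v k n m ∧ v k n m ≤ 1)
    (β : ℕ → ℕ → ℝ) (hβ0 : ∀ n m, 0 ≤ β n m)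
    (hv1 : ∀ k : Fin K, k ≠ k₀ →
      Tendsto (fun p : ℕ × ℕ => v k p.1 p.2) (atTop ×ˢ atTop) (nhds 1))
    (hv0 : Tendsto (fun p : ℕ × ℕ => v k₀ p.1 p.2) (atTop ×ˢ atTop) (nhds 0)) :
    ((∀ᶠ p : ℕ × ℕ in atTop ×ˢ atTop, v k₀ p.1 p.2 > β p.1 p.2) →
      (Tendsto (fun p : ℕ × ℕ => β p.1 p.2) (atTop ×ˢ atTop) (nhds 0) ∧
       (∀ᶠ p : ℕ × ℕ in atTop ×ˢ atTop, ∀ k : Fin K, v k p.1 p.2 > β p.1 p.2) ∧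
       Tendsto
         (fun p : ℕ × ℕ =>
           (∑ k : Fin K,
               (if v k p.1 p.2 > β p.1 p.2 then (1 : ℝ) else 0) * (1 - v k p.1 p.2)) /
             max (∑ k : Fin K, (if v k p.1 p.2 > β p.1 p.2 then (1 : ℝ) else 0)) 1)
         (atTop ×ˢ atTop) (nhds (1 / K))))
    ∧
    ((∀ᶠ p : ℕ × ℕ in atTop ×ˢ atTop, ¬ (v k₀ p.1 p.2 > β p.1 p.2)) →
      Tendsto
        (fun p : ℕ × ℕ =>
          (∑ k : Fin K,
              (if v k p.1 p.2 > β p.1 p.2 then (1 : ℝ) else 0) * (1 - v k p.1 p.2)) /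
            max (∑ k : Fin K, (if v k p.1 p.2 > β p.1 p.2 then (1 : ℝ) else 0)) 1)
        (atTop ×ˢ atTop) (nhds 0)) := by
  have : Nonempty (Fin K) := ⟨k₀⟩
  set V : Fin K → ℕ × ℕ → ℝ := fun k p => v k p.1 p.2
  refine ⟨fun hrej => ?_, fun hkeep => ?_⟩
  · have hβ := tendsto_threshold_zero (v := V) (fun p => hβ0 p.1 p.2) hv0 hrej
    have hall := eventually_forall_threshold_lt (v := V) hv1 hβ hrej
    have hcFDR := tendsto_cFDR_threshold_of_eventually_forall_lt hv1 hv0 hall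
    rw [Fintype.card_fin] at hcFDR
    exact ⟨hβ, hall, hcFDR⟩
  · exact tendsto_cFDR_threshold_of_eventually_not_lt (v := V) (fun k p => (hv01 k p.1 p.2).2)
      hv1 hkeep

/-- The only possible nonzero asymptotic value of the conditional FDR under the
thresholding decision is `1/K`: (a) if eventually the best model `k₀` is rejected
(`v k₀ > β`), then `β → 0`, eventually all hypotheses are rejected, and `cFDR → 1/K`;
(b) if eventually the best model is not rejected, then `cFDR → 0`. -/
theorem cFDR_alpha_control_one_over_K
    (K : ℕ) (hK : 2 ≤ K) (k₀ : Fin K)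
    (v : Fin K → ℕ → ℕ → ℝ)
    (hv01 : ∀ k n m, 0 ≤ v k n m ∧ v k n m ≤ 1)
    (β : ℕ → ℕ → ℝ) (hβ0 : ∀ n m, 0 ≤ β n m)
    (hv1 : ∀ k : Fin K, k ≠ k₀ →
      Tendsto (fun p : ℕ × ℕ => v k p.1 p.2) (atTop ×ˢ atTop) (nhds 1))
    (hv0 : Tendsto (fun p : ℕ × ℕ => v k₀ p.1 p.2) (atTop ×ˢ atTop) (nhds 0)) :
    ((∀ᶠ p : ℕ × ℕ in atTop ×ˢ atTop, v k₀ p.1 p.2 > β p.1 p.2) →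
      (Tendsto (fun p : ℕ × ℕ => β p.1 p.2) (atTop ×ˢ atTop) (nhds 0) ∧
       (∀ᶠ p : ℕ × ℕ in atTop ×ˢ atTop, ∀ k : Fin K, v k p.1 p.2 > β p.1 p.2) ∧
       Tendsto
         (fun p : ℕ × ℕ =>
           (∑ k : Fin K,
               (if v k p.1 p.2 > β p.1 p.2 then (1 : ℝ) else 0) * (1 - v k p.1 p.2)) /
             max (∑ k : Fin K, (if v k p.1 p.2 > β p.1 p.2 then (1 : ℝ) else 0)) 1)
         (atTop ×ˢ atTop) (nhds (1 / K))))
    ∧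
    ((∀ᶠ p : ℕ × ℕ in atTop ×ˢ atTop, ¬ (v k₀ p.1 p.2 > β p.1 p.2)) →
      Tendsto
        (fun p : ℕ × ℕ =>
          (∑ k : Fin K,
              (if v k p.1 p.2 > β p.1 p.2 then (1 : ℝ) else 0) * (1 - v k p.1 p.2)) /
            max (∑ k : Fin K, (if v k p.1 p.2 > β p.1 p.2 then (1 : ℝ) else 0)) 1)
        (atTop ×ˢ atTop) (nhds 0)) :=
  cFDR_alpha_control_one_over_K_general K k₀ v hv01 β hβ0 hv1 hv0
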